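/- Let K be a field and q ∈ K an element that is not a root of unity. Let M be the C(q)-module with K-basis {v_n : n ∈ ℕ} ∪ {w_n : n ∈ ℕ} and action a·v_0 = 0, a·v_n = ((qⁿ−1)/(q−1))·v_{n−1} for n ≥ 1, b·v_n = v_{n+1}, a·w_n = qⁿ(w_n + w_{n+1}), b·w_n = (q^{−n}/(1−q))·w_n + (−1)ⁿ v_0; let V = span_K{v_n : n ∈ ℕ} and W = M/V, and for n ∈ ℕ let W_n be the image in W of span_K{w_m : m ≥ n}. Then W = W_0 ⊋ W_1 ⊋ W_2 ⊋ ⋯ is a strictly descending chain, every nonzero C(q)-submodule of W equals W_n for some n (so the submodules of W are linearly ordered by inclusion), and for m ≠ n the modules W_m and W_n are not isomorphic. -/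

import Mathlib

noncomputable section

open FreeAlgebra

/-- Defining relation of the quantized Weyl algebra `C(q)`: `a * b = q • (b * a) + 1`,
where `ι K 0` plays the role of `a` and `ι K 1` plays the role of `b`. -/
inductive QuantizedWeylRel (K : Type) [Field K] (q : K) :
    FreeAlgebra K (Fin 2) → FreeAlgebra K (Fin 2) → Prop
  | rel : QuantizedWeylRel K q (ι K (0 : Fin 2) * ι K (1 : Fin 2))
      (q • (ι K (1 : Fin 2) * ι K (0 : Fin 2)) + 1)

/-- The quantized Weyl algebra `C(q)`. -/
abbrev QuantizedWeyl (K : Type) [Field K] (q : K) : Type :=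
  RingQuot (QuantizedWeylRel K q)

/-- The generator `a` of the quantized Weyl algebra. -/
def QuantizedWeyl.a (K : Type) [Field K] (q : K) : QuantizedWeyl K q :=
  RingQuot.mkAlgHom K (QuantizedWeylRel K q) (ι K (0 : Fin 2))

/-- The generator `b` of the quantized Weyl algebra. -/
def QuantizedWeyl.b (K : Type) [Field K] (q : K) : QuantizedWeyl K q :=
  RingQuot.mkAlgHom K (QuantizedWeylRel K q) (ι K (1 : Fin 2))

/-! In `W = M / V` the classes `e n` of the `w n` form a `K`-basis on which `b` acts diagonally,
with the pairwise distinct eigenvalues `q⁻ⁿ / (1 - q)`, while `a • e n = qⁿ • (e n + e (n + 1))`.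
A `b`-stable subspace is therefore spanned by the basis vectors it contains (apply `b - λ` to
remove coordinates one at a time), and `a`-stability makes that set of indices upward closed,
so a nonzero submodule is some `W n = span {e m | m ≥ n}`. The eigenvalue of `e m` occurs in
`W m` but not in `W n` for `n > m`, so these modules are pairwise non-isomorphic. -/

open Submodule Set Function

theorem QuantizedWeyl.adjoin_a_b (K : Type) [Field K] (q : K) :
    Algebra.adjoin K {QuantizedWeyl.a K q, QuantizedWeyl.b K q} = ⊤ := by
  have hab : {QuantizedWeyl.a K q, QuantizedWeyl.b K q} =
      RingQuot.mkAlgHom K (QuantizedWeylRel K q) '' range (ι K) := by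
    ext x
    simp [QuantizedWeyl.a, QuantizedWeyl.b, Fin.exists_fin_two, eq_comm]
  rw [hab, Algebra.adjoin_image, adjoin_range_ι, Algebra.map_top, AlgHom.range_eq_top]
  exact RingQuot.mkAlgHom_surjective K _

theorem Submodule.smul_mem_of_adjoin_eq_top {R A N : Type*} [CommSemiring R] [Semiring A]
    [Algebra R A] [AddCommMonoid N] [Module R N] [Module A N] [IsScalarTower R A N] {s : Set A}
    (hs : Algebra.adjoin R s = ⊤) {P : Submodule R N} (hP : ∀ a ∈ s, ∀ x ∈ P, a • x ∈ P)
    (c : A) : ∀ x ∈ P, c • x ∈ P := by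
  induction (hs ▸ Algebra.mem_top : c ∈ Algebra.adjoin R s) using Algebra.adjoin_induction with
  | mem a ha => exact hP a ha
  | algebraMap r => intro x hx; rw [algebraMap_smul]; exact P.smul_mem r hx
  | add a a' _ _ ha ha' => intro x hx; rw [add_smul]; exact P.add_mem (ha x hx) (ha' x hx)
  | mul a a' _ _ ha ha' => intro x hx; rw [mul_smul]; exact ha _ (ha' x hx)

theorem Submodule.restrictScalars_span_of_adjoin_eq_top {R A N : Type*} [CommSemiring R]
    [Semiring A] [Algebra R A] [AddCommMonoid N] [Module R N] [Module A N]
    [IsScalarTower R A N] {s : Set A} (hs : Algebra.adjoin R s = ⊤) {S : Set N}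
    (hS : ∀ a ∈ s, ∀ v ∈ S, a • v ∈ span R S) :
    (span A S).restrictScalars R = span R S := by
  refine le_antisymm (fun x hx => ?_) (span_le_restrictScalars R A S)
  induction hx using span_induction with
  | mem x hx => exact subset_span hx
  | zero => exact zero_mem _
  | add x y _ _ hx hy => exact add_mem hx hy
  | smul c x _ hx =>
    refine smul_mem_of_adjoin_eq_top hs (fun a ha y hy => ?_) c x hx
    exact (span_le (p := (span R S).comap (Algebra.lsmul R R N a))).2 (hS a ha) hy

namespace Module.Basis

section Eigenbasis

variable {K W ι : Type*} [Field K] [AddCommGroup W] [Module K W] (e : Basis ι K W)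
  {T : W →ₗ[K] W} {μ : ι → K}

theorem repr_apply_of_apply_eq_smul (he : ∀ i, T (e i) = μ i • e i) (x : W) (i : ι) :
    e.repr (T x) i = μ i * e.repr x i := by
  have hlin : (Finsupp.lapply i ∘ₗ e.repr.toLinearMap) ∘ₗ T =
      μ i • (Finsupp.lapply i ∘ₗ e.repr.toLinearMap) := by
    refine e.ext fun j => ?_
    obtain rfl | hji := eq_or_ne j i <;> simp [*]
  simpa using LinearMap.congr_fun hlin x

theorem mem_of_repr_ne_zero (hμ : Function.Injective μ) (he : ∀ i, T (e i) = μ i • e i)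
    {N : Submodule K W} (hN : ∀ x ∈ N, T x ∈ N) {x : W} (hx : x ∈ N) {i : ι}
    (hi : e.repr x i ≠ 0) : e i ∈ N := by
  classical
  induction hs : (e.repr x).support using Finset.strongInduction generalizing x with
  | H s ih =>
    by_cases hsi : s ⊆ {i}
    · have hxi : x = e.repr x i • e i := by
        apply e.repr.injective
        rw [map_smul, e.repr_self, Finsupp.smul_single_one]
        exact Finsupp.support_subset_singleton.1 (hs ▸ hsi)
      rw [hxi] at hx
      exact (N.smul_mem_iff hi).1 hx
    obtain ⟨j, hj, hji⟩ := Finset.not_subset.1 hsi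
    rw [Finset.mem_singleton] at hji
    -- `T - μ j` kills the `j`-th coordinate and rescales the others by nonzero factors
    have hy : ∀ k, e.repr (T x - μ j • x) k = (μ k - μ j) * e.repr x k := by
      intro k
      rw [map_sub, map_smul, Finsupp.sub_apply, Finsupp.smul_apply,
        repr_apply_of_apply_eq_smul e he, smul_eq_mul, sub_mul]
    have hsub : (e.repr (T x - μ j • x)).support ⊂ s := by
      refine lt_of_le_of_lt (fun k hk => ?_) (Finset.erase_ssubset hj)
      rw [Finsupp.mem_support_iff, hy, mul_ne_zero_iff, sub_ne_zero] at hk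
      rw [Finset.mem_erase, ← hs, Finsupp.mem_support_iff]
      exact ⟨fun hkj => hk.1 (congrArg μ hkj), hk.2⟩
    refine ih _ hsub (sub_mem (hN x hx) (N.smul_mem _ hx)) ?_ rfl
    rw [hy]
    exact mul_ne_zero (sub_ne_zero.2 fun h => hji (hμ h.symm)) hi

theorem span_image_setOf_mem_eq (hμ : Function.Injective μ) (he : ∀ i, T (e i) = μ i • e i)
    {N : Submodule K W} (hN : ∀ x ∈ N, T x ∈ N) : span K (e '' {i | e i ∈ N}) = N :=
  le_antisymm (span_le.2 (image_subset_iff.2 fun _ h => h)) fun _ hx => e.mem_span_image.2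
    fun _ hi => e.mem_of_repr_ne_zero hμ he hN hx (Finsupp.mem_support_iff.1 hi)

theorem support_repr_subset_of_apply_eq_smul (hμ : Function.Injective μ)
    (he : ∀ i, T (e i) = μ i • e i) {x : W} {j : ι} (hx : T x = μ j • x) :
    (e.repr x).support ⊆ {j} := by
  intro i hi
  rw [Finsupp.mem_support_iff] at hi
  have h := e.repr_apply_of_apply_eq_smul he x i
  rw [hx, map_smul, Finsupp.smul_apply, smul_eq_mul] at h
  exact Finset.mem_singleton.2 (hμ (mul_right_cancel₀ hi h.symm))

end Eigenbasis

section QuotientBasis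

variable {R S M ι κ : Type*} [Ring R] [Ring S] [SMul R S] [AddCommGroup M] [Module R M]
  [Module S M] [IsScalarTower R S M]

def quotientSumInr (b : Basis (ι ⊕ κ) R M) (V : Submodule S M)
    (hV : V.restrictScalars R = span R (range (b ∘ Sum.inl))) : Basis κ R (M ⧸ V) :=
  have hcompl : IsCompl (span R (range (b ∘ Sum.inl))) (span R (range (b ∘ Sum.inr))) := by
    rw [range_comp, range_comp]
    exact b.linearIndependent.isCompl_span_image b.span_eq isCompl_range_inl_range_inr
  (Basis.span (b.linearIndependent.comp Sum.inr Sum.inr_injective)).map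
    ((quotientEquivOfIsCompl _ _ hcompl).symm ≪≫ₗ quotEquivOfEq _ _ hV.symm ≪≫ₗ
      Quotient.restrictScalarsEquiv R V)

theorem quotientSumInr_apply (b : Basis (ι ⊕ κ) R M) (V : Submodule S M)
    (hV : V.restrictScalars R = span R (range (b ∘ Sum.inl))) (k : κ) :
    b.quotientSumInr V hV k = Submodule.Quotient.mk (b (Sum.inr k)) := by
  simp [quotientSumInr]

end QuotientBasis

end Module.Basis

theorem pow_injective_of_ne_zero_of_pow_ne_one {K : Type*} [Field K] {q : K} (hq0 : q ≠ 0)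
    (hq : ∀ k : ℕ, 0 < k → q ^ k ≠ 1) : Injective fun n : ℕ => q ^ n := by
  have hu : ¬IsOfFinOrder (Units.mk0 q hq0) := fun h => by
    obtain ⟨k, hk, hk1⟩ := h.exists_pow_eq_one
    exact hq k hk (by simpa using congrArg Units.val hk1)
  intro m n hmn
  exact injective_pow_iff_not_isOfFinOrder.2 hu (Units.ext (by simpa using hmn))

namespace QuantizedWeyl

variable {K : Type} [Field K] {q : K} {W : Type} [AddCommGroup W] [Module K W]
  [Module (QuantizedWeyl K q) W] [IsScalarTower K (QuantizedWeyl K q) W]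
  {e : Module.Basis ℕ K W} {lam : ℕ → K}

theorem restrictScalars_span_image_Ici (ha : ∀ n, a K q • e n = q ^ n • (e n + e (n + 1)))
    (hb : ∀ n, b K q • e n = lam n • e n) (n : ℕ) :
    (span (QuantizedWeyl K q) (e '' Ici n)).restrictScalars K = span K (e '' Ici n) := by
  have he : ∀ {m}, n ≤ m → e m ∈ span K (e '' Ici n) := fun hm => subset_span ⟨_, hm, rfl⟩
  refine restrictScalars_span_of_adjoin_eq_top (adjoin_a_b K q) ?_
  rintro c (rfl | rfl) _ ⟨m, hm, rfl⟩
  · rw [ha]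
    exact smul_mem _ _ (add_mem (he hm) (he (hm.trans m.le_succ)))
  · rw [hb]
    exact smul_mem _ _ (he hm)

theorem mem_span_image_Ici_iff (ha : ∀ n, a K q • e n = q ^ n • (e n + e (n + 1)))
    (hb : ∀ n, b K q • e n = lam n • e n) {n : ℕ} {x : W} :
    x ∈ span (QuantizedWeyl K q) (e '' Ici n) ↔ ↑(e.repr x).support ⊆ Ici n := by
  rw [← restrictScalars_mem K, restrictScalars_span_image_Ici ha hb, e.mem_span_image]

theorem span_image_Ici_zero : span (QuantizedWeyl K q) (e '' Ici 0) = ⊤ := by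
  refine eq_top_iff.2 fun x _ => span_le_restrictScalars K _ _ ?_
  rw [← bot_eq_zero, Ici_bot, image_univ, e.span_eq]
  exact mem_top

theorem strictAnti_span_image_Ici (ha : ∀ n, a K q • e n = q ^ n • (e n + e (n + 1)))
    (hb : ∀ n, b K q • e n = lam n • e n) :
    StrictAnti fun n => span (QuantizedWeyl K q) (e '' Ici n) := by
  refine strictAnti_nat_of_succ_lt fun n => SetLike.lt_iff_le_and_exists.2
    ⟨span_mono (image_mono (Ici_subset_Ici.2 n.le_succ)), e n,
      subset_span ⟨n, mem_Ici.2 le_rfl, rfl⟩, ?_⟩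
  simp [mem_span_image_Ici_iff ha hb]

theorem exists_eq_span_image_Ici (hq0 : q ≠ 0) (hlam : Injective lam)
    (ha : ∀ n, a K q • e n = q ^ n • (e n + e (n + 1))) (hb : ∀ n, b K q • e n = lam n • e n)
    {N : Submodule (QuantizedWeyl K q) W} (hN : N ≠ ⊥) :
    ∃ n, N = span (QuantizedWeyl K q) (e '' Ici n) := by
  have hNb : ∀ x ∈ N.restrictScalars K, Algebra.lsmul K K W (b K q) x ∈ N.restrictScalars K :=
    fun x hx => N.smul_mem _ hx
  have hmem : ∀ {x}, x ∈ N → ∀ {i}, e.repr x i ≠ 0 → e i ∈ N :=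
    fun hx _ hi => e.mem_of_repr_ne_zero hlam hb hNb hx hi
  have hne : {i | e i ∈ N}.Nonempty := by
    obtain ⟨x, hxN, hx0⟩ := N.ne_bot_iff.1 hN
    obtain ⟨i, hi⟩ := Finsupp.ne_iff.1 (e.repr.map_ne_zero_iff.2 hx0)
    exact ⟨i, hmem hxN hi⟩
  -- `e (i + 1) = (q ^ i)⁻¹ • a • e i - e i`
  have hsucc : ∀ i, e i ∈ N → e (i + 1) ∈ N := by
    intro i hi
    have h := N.smul_mem ((q ^ i)⁻¹ • a K q) hi
    rw [smul_assoc, ha, smul_smul, inv_mul_cancel₀ (pow_ne_zero i hq0), one_smul] at h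
    simpa using sub_mem h hi
  have hup : IsUpperSet {i | e i ∈ N} := fun i j hij hi =>
    Nat.le_induction hi (fun k _ hk => hsucc k hk) j hij
  obtain ⟨n, hn⟩ := hup.eq_empty_or_Ici.resolve_left hne.ne_empty
  refine ⟨n, restrictScalars_injective K _ _ ?_⟩
  rw [restrictScalars_span_image_Ici ha hb, ← hn]
  exact (e.span_image_setOf_mem_eq hlam hb hNb).symm

theorem isEmpty_linearEquiv_span_image_Ici (hlam : Injective lam)
    (ha : ∀ n, a K q • e n = q ^ n • (e n + e (n + 1))) (hb : ∀ n, b K q • e n = lam n • e n)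
    {m n : ℕ} (hmn : m ≠ n) :
    IsEmpty (span (QuantizedWeyl K q) (e '' Ici m) ≃ₗ[QuantizedWeyl K q]
      span (QuantizedWeyl K q) (e '' Ici n)) := by
  wlog hlt : m < n generalizing m n
  · exact ⟨fun φ => (this hmn.symm (hmn.lt_or_gt.resolve_left hlt)).false φ.symm⟩
  refine ⟨fun φ => ?_⟩
  set x : span (QuantizedWeyl K q) (e '' Ici m) := ⟨e m, subset_span ⟨m, mem_Ici.2 le_rfl, rfl⟩⟩
  have hx0 : x ≠ 0 := fun h => e.ne_zero m (congrArg Subtype.val h)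
  have hy : b K q • (φ x : W) = lam m • (φ x : W) := by
    rw [← coe_smul, ← coe_smul_of_tower, ← map_smul, ← LinearMapClass.map_smul_of_tower]
    exact congrArg _ (congrArg _ (Subtype.ext (hb m)))
  have hy0 : (φ x : W) ≠ 0 := by simpa using hx0
  obtain ⟨k, hk⟩ := Finsupp.support_nonempty_iff.2 (e.repr.map_ne_zero_iff.2 hy0)
  have hkm : k = m := Finset.mem_singleton.1
    (e.support_repr_subset_of_apply_eq_smul (T := Algebra.lsmul K K W (b K q)) hlam hb hy hk)
  have hnk : n ≤ k := (mem_span_image_Ici_iff ha hb).1 (φ x).2 hk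
  omega

end QuantizedWeyl

open QuantizedWeyl

theorem quantizedWeyl_W_submodules_general (K : Type) [Field K] (q : K) (hq0 : q ≠ 0)
    (hq : ∀ k : ℕ, 0 < k → q ^ k ≠ 1)
    (M : Type) [AddCommGroup M] [Module K M] [Module (QuantizedWeyl K q) M]
    [IsScalarTower K (QuantizedWeyl K q) M]
    (bas : Module.Basis (ℕ ⊕ ℕ) K M)
    (haw : ∀ n : ℕ, QuantizedWeyl.a K q • bas (Sum.inr n) =
      q ^ n • (bas (Sum.inr n) + bas (Sum.inr (n + 1))))
    (hbw : ∀ n : ℕ, QuantizedWeyl.b K q • bas (Sum.inr n) =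
      ((q ^ n)⁻¹ / (1 - q)) • bas (Sum.inr n) + ((-1 : K) ^ n) • bas (Sum.inl 0))
    (V : Submodule (QuantizedWeyl K q) M)
    (hV : (V : Set M) = (Submodule.span K (Set.range fun n : ℕ => bas (Sum.inl n)) :
      Submodule K M)) :
    ∃ Wn : ℕ → Submodule (QuantizedWeyl K q) (M ⧸ V),
      (∀ n : ℕ, (Wn n : Set (M ⧸ V)) =
        V.mkQ '' (Submodule.span K ((fun m : ℕ => bas (Sum.inr m)) '' {m : ℕ | n ≤ m}) :
          Submodule K M)) ∧
      Wn 0 = ⊤ ∧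
      StrictAnti Wn ∧
      (∀ N : Submodule (QuantizedWeyl K q) (M ⧸ V), N ≠ ⊥ → ∃ n : ℕ, N = Wn n) ∧
      (∀ m n : ℕ, m ≠ n → IsEmpty ((Wn m) ≃ₗ[QuantizedWeyl K q] (Wn n))) := by
  set e := bas.quotientSumInr V (SetLike.coe_injective hV)
  have he : ⇑e = fun n => Submodule.Quotient.mk (bas (Sum.inr n)) :=
    funext (bas.quotientSumInr_apply V _)
  have hv : (Submodule.Quotient.mk (bas (Sum.inl 0)) : M ⧸ V) = 0 := by
    rw [Quotient.mk_eq_zero, ← SetLike.mem_coe, hV]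
    exact subset_span ⟨0, rfl⟩
  have ha : ∀ n, a K q • e n = q ^ n • (e n + e (n + 1)) := by
    intro n
    rw [he, ← Quotient.mk_smul, haw, Quotient.mk_smul, Quotient.mk_add]
  have hb : ∀ n, b K q • e n = ((q ^ n)⁻¹ / (1 - q)) • e n := by
    intro n
    rw [he, ← Quotient.mk_smul, hbw, Quotient.mk_add, Quotient.mk_smul, Quotient.mk_smul, hv,
      smul_zero, add_zero]
  have h1q : (1 : K) - q ≠ 0 := sub_ne_zero.2 (by simpa using (hq 1 one_pos).symm)
  have hlam : Injective fun n : ℕ => (q ^ n)⁻¹ / (1 - q) := fun m n h =>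
    pow_injective_of_ne_zero_of_pow_ne_one hq0 hq (inv_injective ((div_left_inj' h1q).1 h))
  refine ⟨fun n => span _ (e '' Ici n), fun n => ?_, span_image_Ici_zero,
    strictAnti_span_image_Ici ha hb, fun N hN => exists_eq_span_image_Ici hq0 hlam ha hb hN,
    fun m n hmn => isEmpty_linearEquiv_span_image_Ici hlam ha hb hmn⟩
  rw [← coe_restrictScalars K, restrictScalars_span_image_Ici ha hb]
  change _ = ⇑(V.mkQ.restrictScalars K) '' _
  rw [← map_coe, map_span, image_image, he]
  rfl

/-- Let `M` be the `C(q)`-module (`q` not a root of unity) with `K`-basis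
`{v_n} ∪ {w_n}` and action as in the paper, let `V` be its `C(q)`-submodule
`span_K{v_n}`, let `W = M/V`, and for `n ∈ ℕ` let `W_n` be the image in `W` of
`span_K{w_m : m ≥ n}`.  Then each `W_n` is a `C(q)`-submodule of `W`,
`W = W_0 ⊋ W_1 ⊋ ⋯` is a strictly descending chain, every nonzero `C(q)`-submodule of
`W` equals some `W_n` (so the submodules of `W` are linearly ordered by inclusion),
and for `m ≠ n` the modules `W_m`, `W_n` are non-isomorphic. -/
theorem quantizedWeyl_W_submodules (K : Type) [Field K] (q : K) (hq0 : q ≠ 0)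
    (hq : ∀ k : ℕ, 0 < k → q ^ k ≠ 1)
    (M : Type) [AddCommGroup M] [Module K M] [Module (QuantizedWeyl K q) M]
    [IsScalarTower K (QuantizedWeyl K q) M]
    (bas : Module.Basis (ℕ ⊕ ℕ) K M)
    (ha0 : QuantizedWeyl.a K q • bas (Sum.inl 0) = (0 : M))
    (hav : ∀ n : ℕ, QuantizedWeyl.a K q • bas (Sum.inl (n + 1)) =
      ((q ^ (n + 1) - 1) / (q - 1)) • bas (Sum.inl n))
    (hbv : ∀ n : ℕ, QuantizedWeyl.b K q • bas (Sum.inl n) = bas (Sum.inl (n + 1)))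
    (haw : ∀ n : ℕ, QuantizedWeyl.a K q • bas (Sum.inr n) =
      q ^ n • (bas (Sum.inr n) + bas (Sum.inr (n + 1))))
    (hbw : ∀ n : ℕ, QuantizedWeyl.b K q • bas (Sum.inr n) =
      ((q ^ n)⁻¹ / (1 - q)) • bas (Sum.inr n) + ((-1 : K) ^ n) • bas (Sum.inl 0))
    (V : Submodule (QuantizedWeyl K q) M)
    (hV : (V : Set M) = (Submodule.span K (Set.range fun n : ℕ => bas (Sum.inl n)) :
      Submodule K M)) :
    ∃ Wn : ℕ → Submodule (QuantizedWeyl K q) (M ⧸ V),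
      (∀ n : ℕ, (Wn n : Set (M ⧸ V)) =
        V.mkQ '' (Submodule.span K ((fun m : ℕ => bas (Sum.inr m)) '' {m : ℕ | n ≤ m}) :
          Submodule K M)) ∧
      Wn 0 = ⊤ ∧
      StrictAnti Wn ∧
      (∀ N : Submodule (QuantizedWeyl K q) (M ⧸ V), N ≠ ⊥ → ∃ n : ℕ, N = Wn n) ∧
      (∀ m n : ℕ, m ≠ n → IsEmpty ((Wn m) ≃ₗ[QuantizedWeyl K q] (Wn n))) :=
  quantizedWeyl_W_submodules_general K q hq0 hq M bas haw hbw V hV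

end
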